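/- arXiv:2008.04510 — 2 statements merged into one kernel-verified Lean document; each statement's English description precedes it below -/
import Mathlib

section
/- (Many-to-one, maximum error.) Let K ≥ 2, let X be a countable type, and for each i ∈ {0,…,K−1} let Dᵢ be a probability distribution (PMF) on X and fᵢ* : X → Y a ground-truth translator into a countable type Y. Let Z be a measurable space and g : X → Z satisfy d_TV(g♯Dᵢ, g♯Dⱼ) ≤ ε for all i ≠ j. Then for every measurable decoder h : Z → Y, 2·max_{i} Pr_{X∼Dᵢ}(h(g(X)) ≠ fᵢ*(X)) ≥ max_{i≠j} d_TV(fᵢ*♯Dᵢ, fⱼ*♯Dⱼ) − ε. -/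
/-!
All sources are decoded by the same translator `h ∘ g`. On an event `E`, the law of `fᵢ*` under
`Dᵢ` and the law of `h ∘ g` under `Dᵢ` differ by at most the error of `h ∘ g` on `Dᵢ`, while the
laws of `h ∘ g` under `Dᵢ` and `Dⱼ` differ by at most `d_TV(g♯Dᵢ, g♯Dⱼ) ≤ ε`, because `h ∘ g`
factors through `g`. The triangle inequality then bounds `d_TV(fᵢ*♯Dᵢ, fⱼ*♯Dⱼ)` by
`errᵢ + errⱼ + ε ≤ 2 · maxₖ errₖ + ε`.
-/

open MeasureTheory

noncomputable def tvDist {α : Type*} [MeasurableSpace α] (P Q : Measure α) : ℝ :=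
  ⨆ E : {s : Set α // MeasurableSet s}, |(P E.1).toReal - (Q E.1).toReal|

section

variable {α β γ : Type*} [MeasurableSpace α]

lemma abs_measureReal_sub_le_add_univ (P Q : Measure α) [IsFiniteMeasure P]
    [IsFiniteMeasure Q] (s : Set α) : |P.real s - Q.real s| ≤ P.real .univ + Q.real .univ := by
  have hP : P.real s ≤ P.real .univ := measureReal_mono (Set.subset_univ s)
  have hQ : Q.real s ≤ Q.real .univ := measureReal_mono (Set.subset_univ s)
  have : 0 ≤ P.real s := measureReal_nonneg
  have : 0 ≤ Q.real s := measureReal_nonneg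
  exact abs_sub_le_iff.2 ⟨by linarith, by linarith⟩

lemma abs_measureReal_sub_le_tvDist (P Q : Measure α) [IsFiniteMeasure P]
    [IsFiniteMeasure Q] {s : Set α} (hs : MeasurableSet s) :
    |P.real s - Q.real s| ≤ tvDist P Q :=
  le_ciSup (f := fun E : {s : Set α // MeasurableSet s} => |P.real E - Q.real E|)
    ⟨_, Set.forall_mem_range.2 fun E => abs_measureReal_sub_le_add_univ P Q E⟩ ⟨s, hs⟩

lemma abs_measureReal_preimage_sub_le (μ : Measure α) [IsFiniteMeasure μ] (u v : α → β)
    (s : Set β) : |μ.real (u ⁻¹' s) - μ.real (v ⁻¹' s)| ≤ μ.real {x | u x ≠ v x} := by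
  have key : ∀ u v : α → β, μ.real (u ⁻¹' s) - μ.real (v ⁻¹' s) ≤ μ.real {x | u x ≠ v x} :=
    fun u v => (le_measureReal_sdiff).trans <|
      measureReal_mono fun x ⟨hu, hv⟩ huv => hv (show v x ∈ s from huv ▸ hu)
  refine abs_sub_le_iff.2 ⟨key u v, ?_⟩
  simpa only [ne_comm] using key v u

variable [MeasurableSpace β] [MeasurableSpace γ]

lemma tvDist_map_le_add (μ ν : Measure α) [IsFiniteMeasure μ] [IsFiniteMeasure ν]
    {u v : α → β} {g : α → γ} {h : γ → β} (hu : Measurable u) (hv : Measurable v)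
    (hg : Measurable g) (hh : Measurable h) :
    tvDist (μ.map u) (ν.map v) ≤
      μ.real {x | h (g x) ≠ u x} + ν.real {x | h (g x) ≠ v x} + tvDist (μ.map g) (ν.map g) := by
  have : Nonempty {s : Set β // MeasurableSet s} := ⟨⟨∅, .empty⟩⟩
  refine ciSup_le fun ⟨s, hs⟩ => ?_
  show |(μ.map u).real s - (ν.map v).real s| ≤ _
  have hmid := abs_measureReal_sub_le_tvDist (μ.map g) (ν.map g) (hh hs)
  rw [map_measureReal_apply hg (hh hs), map_measureReal_apply hg (hh hs)] at hmid
  rw [map_measureReal_apply hu hs, map_measureReal_apply hv hs]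
  have hμ : |μ.real (u ⁻¹' s) - μ.real (g ⁻¹' (h ⁻¹' s))| ≤ μ.real {x | h (g x) ≠ u x} := by
    rw [abs_sub_comm]; exact abs_measureReal_preimage_sub_le μ (h ∘ g) u s
  have hν : |ν.real (g ⁻¹' (h ⁻¹' s)) - ν.real (v ⁻¹' s)| ≤ ν.real {x | h (g x) ≠ v x} :=
    abs_measureReal_preimage_sub_le ν (h ∘ g) v s
  linarith [abs_sub_le (μ.real (u ⁻¹' s)) (μ.real (g ⁻¹' (h ⁻¹' s))) (ν.real (v ⁻¹' s)),
    abs_sub_le (μ.real (g ⁻¹' (h ⁻¹' s))) (ν.real (g ⁻¹' (h ⁻¹' s))) (ν.real (v ⁻¹' s))]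

end

theorem many_to_one_max_lower_bound_general {X Y Z : Type*}
    [MeasurableSpace X] [DiscreteMeasurableSpace X]
    [MeasurableSpace Y]
    [MeasurableSpace Z]
    (K : ℕ) (hK : 2 ≤ K)
    (D : Fin K → PMF X) (f : Fin K → X → Y) (g : X → Z) (ε : ℝ)
    (hg : ∀ i j, i ≠ j →
      tvDist ((D i).map g).toMeasure ((D j).map g).toMeasure ≤ ε)
    {h : Z → Y} (hh : Measurable h) :
    2 * (⨆ i : Fin K, ((D i).toMeasure {x | h (g x) ≠ f i x}).toReal)
      ≥ (⨆ p : {p : Fin K × Fin K // p.1 ≠ p.2},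
          tvDist ((D p.1.1).map (f p.1.1)).toMeasure
            ((D p.1.2).map (f p.1.2)).toMeasure) - ε := by
  have : Nonempty {p : Fin K × Fin K // p.1 ≠ p.2} :=
    ⟨⟨(⟨0, by omega⟩, ⟨1, by omega⟩), by simp [Fin.ext_iff]⟩⟩
  have herr (i : Fin K) : (D i).toMeasure.real {x | h (g x) ≠ f i x} ≤
      ⨆ i : Fin K, ((D i).toMeasure {x | h (g x) ≠ f i x}).toReal :=
    le_ciSup (f := fun i => (D i).toMeasure.real {x | h (g x) ≠ f i x})
      (Finite.bddAbove_range _) i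
  rw [ge_iff_le, sub_le_iff_le_add]
  refine ciSup_le fun ⟨(i, j), hij⟩ => ?_
  have hgij := hg i j hij
  rw [← PMF.toMeasure_map g _ .of_discrete, ← PMF.toMeasure_map g _ .of_discrete] at hgij
  rw [← PMF.toMeasure_map (f i) _ .of_discrete, ← PMF.toMeasure_map (f j) _ .of_discrete]
  have hpair := tvDist_map_le_add (D i).toMeasure (D j).toMeasure (u := f i) (v := f j)
    (g := g) .of_discrete .of_discrete .of_discrete hh
  linarith [herr i, herr j]

/-- Many-to-one, maximum error: twice the maximum translation error over the `K` source
languages is at least the maximum pairwise total variation distance between the target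
marginals, minus `ε`. -/
theorem many_to_one_max_lower_bound {X Y Z : Type*}
    [Countable X] [MeasurableSpace X] [DiscreteMeasurableSpace X]
    [Countable Y] [MeasurableSpace Y] [DiscreteMeasurableSpace Y]
    [MeasurableSpace Z]
    (K : ℕ) (hK : 2 ≤ K)
    (D : Fin K → PMF X) (f : Fin K → X → Y) (g : X → Z) (ε : ℝ)
    (hg : ∀ i j, i ≠ j →
      tvDist ((D i).map g).toMeasure ((D j).map g).toMeasure ≤ ε)
    {h : Z → Y} (hh : Measurable h) :
    2 * (⨆ i : Fin K, ((D i).toMeasure {x | h (g x) ≠ f i x}).toReal)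
      ≥ (⨆ p : {p : Fin K × Fin K // p.1 ≠ p.2},
          tvDist ((D p.1.1).map (f p.1.1)).toMeasure
            ((D p.1.2).map (f p.1.2)).toMeasure) - ε :=
  many_to_one_max_lower_bound_general K hK D f g ε hg hh
end

section
/- (Many-to-one, average error.) Let K ≥ 2, let X be a countable type, and for each i ∈ {0,…,K−1} let Dᵢ be a probability distribution (PMF) on X and fᵢ* : X → Y a ground-truth translator into a countable type Y. Let Z be a measurable space and g : X → Z satisfy d_TV(g♯Dᵢ, g♯Dⱼ) ≤ ε for all i ≠ j. Then for every measurable decoder h : Z → Y, (K−1)·Σ_{i} Pr_{X∼Dᵢ}(h(g(X)) ≠ fᵢ*(X)) ≥ Σ_{i<j} d_TV(fᵢ*♯Dᵢ, fⱼ*♯Dⱼ) − (K(K−1)/2)·ε. -/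
/-!
For a pair `i < j`, the decoded output `h ∘ g` sits between the two target marginals: by the
triangle inequality for total variation, `d_TV(fᵢ*♯Dᵢ, fⱼ*♯Dⱼ)` is at most the TV distance from
`fᵢ*♯Dᵢ` to `(h ∘ g)♯Dᵢ` (at most the error on `Dᵢ`, since the two maps agree off the error
event), plus `d_TV((h ∘ g)♯Dᵢ, (h ∘ g)♯Dⱼ) ≤ d_TV(g♯Dᵢ, g♯Dⱼ) ≤ ε` (data processing), plus the
error on `Dⱼ`. Summing over the `K(K-1)/2` pairs counts each language's error `K - 1` times.
-/

open MeasureTheory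

open Finset

section TotalVariation

variable {α β : Type*} [MeasurableSpace α] [MeasurableSpace β] {μ ν ρ : Measure α}

lemma tvDist_comm (μ ν : Measure α) : tvDist μ ν = tvDist ν μ := by
  simp only [tvDist, abs_sub_comm]

lemma tvDist_le_of_forall {c : ℝ} (hc : 0 ≤ c)
    (H : ∀ s, MeasurableSet s → |μ.real s - ν.real s| ≤ c) : tvDist μ ν ≤ c :=
  Real.iSup_le (fun s => H s.1 s.2) hc

variable [IsFiniteMeasure μ] [IsFiniteMeasure ν] [IsFiniteMeasure ρ]

lemma abs_measureReal_sub_le_tvDist_s5 {s : Set α} (hs : MeasurableSet s) :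
    |μ.real s - ν.real s| ≤ tvDist μ ν := by
  refine le_ciSup (f := fun s : {s : Set α // MeasurableSet s} => |μ.real s - ν.real s|)
    ⟨μ.real .univ + ν.real .univ, ?_⟩ ⟨s, hs⟩
  rintro _ ⟨t, rfl⟩
  have hμ : μ.real t ≤ μ.real .univ := measureReal_mono (Set.subset_univ _)
  have hν : ν.real t ≤ ν.real .univ := measureReal_mono (Set.subset_univ _)
  rw [abs_sub_le_iff]
  constructor <;>
    linarith [measureReal_nonneg (μ := μ) (s := t), measureReal_nonneg (μ := ν) (s := t)]

lemma tvDist_nonneg : 0 ≤ tvDist μ ν :=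
  (abs_nonneg _).trans (abs_measureReal_sub_le_tvDist_s5 (μ := μ) (ν := ν) .empty)

lemma tvDist_triangle : tvDist μ ν ≤ tvDist μ ρ + tvDist ρ ν :=
  tvDist_le_of_forall (add_nonneg tvDist_nonneg tvDist_nonneg) fun _ hs =>
    (abs_sub_le _ _ _).trans <|
      add_le_add (abs_measureReal_sub_le_tvDist_s5 hs) (abs_measureReal_sub_le_tvDist_s5 hs)

lemma tvDist_map_le {f : α → β} (hf : Measurable f) :
    tvDist (μ.map f) (ν.map f) ≤ tvDist μ ν :=
  tvDist_le_of_forall tvDist_nonneg fun _ hs => by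
    simpa only [map_measureReal_apply hf hs] using abs_measureReal_sub_le_tvDist_s5 (hf hs)

open scoped symmDiff in
lemma tvDist_map_le_measureReal_ne {f g : α → β} (hf : Measurable f) (hg : Measurable g) :
    tvDist (μ.map f) (μ.map g) ≤ μ.real {x | f x ≠ g x} :=
  tvDist_le_of_forall measureReal_nonneg fun s hs => by
    rw [map_measureReal_apply hf hs, map_measureReal_apply hg hs]
    refine (abs_measureReal_sub_le_measureReal_symmDiff (hf hs).nullMeasurableSet
      (hg hs).nullMeasurableSet).trans (measureReal_mono ?_)
    rintro x (⟨hfx, hgx⟩ | ⟨hgx, hfx⟩) hfg <;> simp_all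

end TotalVariation

lemma Finset.sum_filter_lt_add_eq_card_sub_one_mul_sum {ι R : Type*} [Fintype ι] [LinearOrder ι]
    [CommRing R] (e : ι → R) :
    ∑ p ∈ univ.filter (fun p : ι × ι => p.1 < p.2), (e p.1 + e p.2)
      = ((Fintype.card ι : R) - 1) * ∑ i, e i := by
  have hswap : ∑ p ∈ univ.filter (fun p : ι × ι => p.1 < p.2), e p.2
      = ∑ p ∈ univ.filter (fun p : ι × ι => p.2 < p.1), e p.1 :=
    sum_equiv (Equiv.prodComm ι ι) (by simp) (by simp)
  rw [sum_add_distrib, hswap, ← sum_union (disjoint_filter.2 fun _ _ => lt_asymm),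
    ← filter_or]
  simp_rw [lt_or_lt_iff_ne, sum_filter, Fintype.sum_prod_type, ← sum_filter, filter_ne,
    sum_const, card_erase_of_mem (mem_univ _), card_univ, mul_sum, nsmul_eq_mul]
  refine sum_congr rfl fun i _ => ?_
  rw [Nat.cast_sub (Fintype.card_pos_iff.2 ⟨i⟩), Nat.cast_one]

lemma PMF.tvDist_map_le_errors_add_tvDist_map {X Y Z : Type*} [MeasurableSpace X]
    [DiscreteMeasurableSpace X] [MeasurableSpace Y] [MeasurableSpace Z]
    (P Q : PMF X) (f₁ f₂ : X → Y) (g : X → Z) {h : Z → Y} (hh : Measurable h) :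
    tvDist (P.map f₁).toMeasure (Q.map f₂).toMeasure
      ≤ P.toMeasure.real {x | h (g x) ≠ f₁ x} + Q.toMeasure.real {x | h (g x) ≠ f₂ x}
        + tvDist (P.map g).toMeasure (Q.map g).toMeasure := by
  rw [← P.toMeasure_map (f := f₁) .of_discrete, ← Q.toMeasure_map (f := f₂) .of_discrete,
    ← P.toMeasure_map (f := g) .of_discrete, ← Q.toMeasure_map (f := g) .of_discrete]
  set μ := P.toMeasure
  set ν := Q.toMeasure
  have hg : Measurable g := .of_discrete
  have hhg : Measurable (h ∘ g) := hh.comp hg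
  calc tvDist (μ.map f₁) (ν.map f₂)
      ≤ tvDist (μ.map f₁) (μ.map (h ∘ g)) + tvDist (μ.map (h ∘ g)) (ν.map (h ∘ g))
        + tvDist (ν.map (h ∘ g)) (ν.map f₂) := by
        linarith [tvDist_triangle (μ := μ.map f₁) (ρ := μ.map (h ∘ g)) (ν := ν.map f₂),
          tvDist_triangle (μ := μ.map (h ∘ g)) (ρ := ν.map (h ∘ g)) (ν := ν.map f₂)]
    _ ≤ μ.real {x | h (g x) ≠ f₁ x} + tvDist (μ.map g) (ν.map g)
        + ν.real {x | h (g x) ≠ f₂ x} := by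
        gcongr ?_ + ?_ + ?_
        · rw [tvDist_comm]
          exact tvDist_map_le_measureReal_ne hhg .of_discrete
        · rw [← Measure.map_map hh hg, ← Measure.map_map hh hg]
          exact tvDist_map_le hh
        · exact tvDist_map_le_measureReal_ne hhg .of_discrete
    _ = _ := by ring

theorem many_to_one_avg_lower_bound_general {X Y Z : Type*}
    [MeasurableSpace X] [DiscreteMeasurableSpace X]
    [MeasurableSpace Y]
    [MeasurableSpace Z]
    (K : ℕ)
    (D : Fin K → PMF X) (f : Fin K → X → Y) (g : X → Z) (ε : ℝ)
    (hg : ∀ i j, i ≠ j →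
      tvDist ((D i).map g).toMeasure ((D j).map g).toMeasure ≤ ε)
    {h : Z → Y} (hh : Measurable h) :
    ((K : ℝ) - 1) * ∑ i : Fin K, ((D i).toMeasure {x | h (g x) ≠ f i x}).toReal
      ≥ (∑ p ∈ Finset.univ.filter (fun p : Fin K × Fin K => p.1 < p.2),
          tvDist ((D p.1).map (f p.1)).toMeasure ((D p.2).map (f p.2)).toMeasure)
        - ((K : ℝ) * ((K : ℝ) - 1) / 2) * ε := by
  simp only [← measureReal_def]
  -- the excess `ε` of each pair is shared equally between its two languages
  set e : Fin K → ℝ := fun i => (D i).toMeasure.real {x | h (g x) ≠ f i x} + ε / 2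
  have hpair : ∀ p ∈ univ.filter (fun p : Fin K × Fin K => p.1 < p.2),
      tvDist ((D p.1).map (f p.1)).toMeasure ((D p.2).map (f p.2)).toMeasure ≤ e p.1 + e p.2 :=
    fun p hp => (PMF.tvDist_map_le_errors_add_tvDist_map _ _ _ _ g hh).trans <| by
      dsimp only [e]
      linarith [hg p.1 p.2 (mem_filter.1 hp).2.ne]
  have hsum := (sum_le_sum hpair).trans_eq (Finset.sum_filter_lt_add_eq_card_sub_one_mul_sum e)
  simp only [e, sum_add_distrib, sum_const, card_univ, Fintype.card_fin, nsmul_eq_mul] at hsum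
  linarith

/-- Many-to-one, average error: `(K-1)` times the summed translation errors over the `K`
source languages is at least the sum over pairs `i < j` of the total variation distances
between the target marginals, minus `K(K-1)/2 · ε`. -/
theorem many_to_one_avg_lower_bound {X Y Z : Type*}
    [Countable X] [MeasurableSpace X] [DiscreteMeasurableSpace X]
    [Countable Y] [MeasurableSpace Y] [DiscreteMeasurableSpace Y]
    [MeasurableSpace Z]
    (K : ℕ) (hK : 2 ≤ K)
    (D : Fin K → PMF X) (f : Fin K → X → Y) (g : X → Z) (ε : ℝ)
    (hg : ∀ i j, i ≠ j →
      tvDist ((D i).map g).toMeasure ((D j).map g).toMeasure ≤ ε)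
    {h : Z → Y} (hh : Measurable h) :
    ((K : ℝ) - 1) * ∑ i : Fin K, ((D i).toMeasure {x | h (g x) ≠ f i x}).toReal
      ≥ (∑ p ∈ Finset.univ.filter (fun p : Fin K × Fin K => p.1 < p.2),
          tvDist ((D p.1).map (f p.1)).toMeasure ((D p.2).map (f p.2)).toMeasure)
        - ((K : ℝ) * ((K : ℝ) - 1) / 2) * ε :=
  many_to_one_avg_lower_bound_general K D f g ε hg hh
end
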